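/- Let P¹, P² be mutually orthogonal linear subspaces of ℝⁿ with P¹ ⊕ P² = ℝⁿ, let α ∈ [0,π/2], and let 1 ≤ d ≤ min{dim P¹, dim P²}. A d-dimensional linear subspace T ⊆ ℝⁿ is d-analytic between P¹ and P² with angle α if and only if there exist an orthonormal system u₁,…,u_d in P¹ and an orthonormal system v₁,…,v_d in P² such that the vectors w_i = cos α·u_i + sin α·v_i (1 ≤ i ≤ d) form an (orthonormal) basis of T. -/

import Mathlib

open Set Metric MeasureTheory Filter Pointwise
open scoped ENNReal RealInnerProductSpace NNReal

noncomputable section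

/-- `Euc n` is the Euclidean space `ℝⁿ`. -/
abbrev Euc (n : ℕ) : Type := EuclideanSpace ℝ (Fin n)

variable {n : ℕ}

/-- A cone centered at `0`. -/
def IsCone0 (C : Set (Euc n)) : Prop :=
  (0 : Euc n) ∈ C ∧ ∀ t : ℝ, 0 < t → t • C = C

/-- `f` is (the time-one map of) a Lipschitz deformation in the set `U`. -/
def IsDeformationIn (U : Set (Euc n)) (f : Euc n → Euc n) : Prop :=
  ∃ φ : ℝ → Euc n → Euc n,
    (∀ x ∈ U, φ 0 x = x) ∧
    (∀ t ∈ Icc (0:ℝ) 1, MapsTo (φ t) U U) ∧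
    ContinuousOn (fun p : ℝ × Euc n => φ p.1 p.2) (Icc (0:ℝ) 1 ×ˢ U) ∧
    (∃ L : ℝ≥0, LipschitzOnWith L (φ 1) U) ∧
    (∀ x ∈ U, φ 1 x = f x) ∧
    closure (⋃ t ∈ Icc (0:ℝ) 1,
        ({x ∈ U | φ t x ≠ x} ∪ φ t '' {x ∈ U | φ t x ≠ x})) ⊆ U ∧
    IsCompact (closure (⋃ t ∈ Icc (0:ℝ) 1,
        ({x ∈ U | φ t x ≠ x} ∪ φ t '' {x ∈ U | φ t x ≠ x})))

/-- `E` is a `d`-dimensional Almgren minimal set in the open set `U`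
(`E ⊆ U` relatively closed). -/
def IsAlmgrenMinimalIn (d : ℕ) (U E : Set (Euc n)) : Prop :=
  E ⊆ U ∧ closure E ∩ U ⊆ E ∧
  (∀ (x : Euc n) (r : ℝ), closedBall x r ⊆ U → μH[(d:ℝ)] (E ∩ closedBall x r) < ⊤) ∧
  ∀ f : Euc n → Euc n, IsDeformationIn U f →
    μH[(d:ℝ)] (E \ f '' E) ≤ μH[(d:ℝ)] (f '' E \ E)

/-- A set is reduced if it has positive `H^d` measure in every ball centered on it. -/
def IsReducedSet (d : ℕ) (E : Set (Euc n)) : Prop :=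
  ∀ x ∈ E, ∀ r : ℝ, 0 < r → 0 < μH[(d:ℝ)] (E ∩ ball x r)

/-- A (reduced) `d`-dimensional Almgren minimal cone in `ℝⁿ`. -/
def IsAlmgrenMinimalCone (d : ℕ) (C : Set (Euc n)) : Prop :=
  IsClosed C ∧ IsCone0 C ∧ IsReducedSet d C ∧ IsAlmgrenMinimalIn d univ C

/-- The class `F(E,U)` of deformations of `E` in `U`. -/
def deformClass (U E : Set (Euc n)) : Set (Set (Euc n)) :=
  {F | ∃ f, IsDeformationIn U f ∧ F = (E \ U) ∪ f '' (E ∩ U)}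

/-- Convergence in local Hausdorff distance on every compact set. -/
def LocHausTendsto (S : ℕ → Set (Euc n)) (F : Set (Euc n)) : Prop :=
  ∀ K : Set (Euc n), IsCompact K →
    Tendsto (fun k => (⨆ y ∈ S k ∩ K, infDist y F) ⊔ (⨆ y ∈ F ∩ K, infDist y (S k)))
      atTop (nhds 0)

/-- The class `F̄(E,U)` of limits of deformations of `E` in `U`. -/
def limDeformClass (d : ℕ) (U E : Set (Euc n)) : Set (Set (Euc n)) :=
  {F | F ⊆ closure U ∧ IsClosed F ∧
    (∃ S : ℕ → Set (Euc n), (∀ k, S k ∈ deformClass U E) ∧ LocHausTendsto S F) ∧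
    (∀ (x : Euc n) (r : ℝ), μH[(d:ℝ)] (F ∩ closedBall x r) < ⊤) ∧
    μH[(d:ℝ)] ((F ∩ frontier U) \ E) = 0}

/-- `C` is Almgren unique in the domain `U`. -/
def AlmgrenUniqueIn (d : ℕ) (C U : Set (Euc n)) : Prop :=
  ∀ E ∈ limDeformClass d U C,
    μH[(d:ℝ)] E = (⨅ F ∈ limDeformClass d U C, μH[(d:ℝ)] F) → E = C ∩ closure U

/-- `C` is Almgren unique (in every domain). -/
def AlmgrenUnique (d : ℕ) (C : Set (Euc n)) : Prop :=
  ∀ U : Set (Euc n), IsOpen U → IsConnected U → AlmgrenUniqueIn d C U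

/-- `F` is a `δ`-sliding deformation of `E` in `cl(U)`. -/
def IsSlidingDeformation (δ : ℝ) (U E F : Set (Euc n)) : Prop :=
  ∃ φ : ℝ → Euc n → Euc n,
    (∀ x ∈ closure U, φ 0 x = x) ∧
    (∀ t ∈ Icc (0:ℝ) 1, MapsTo (φ t) (closure U) (closure U)) ∧
    ContinuousOn (fun p : ℝ × Euc n => φ p.1 p.2) (Icc (0:ℝ) 1 ×ˢ closure U) ∧
    (∃ L : ℝ≥0, LipschitzOnWith L (φ 1) (closure U)) ∧
    (∀ t ∈ Icc (0:ℝ) 1, MapsTo (φ t) (frontier U) (frontier U)) ∧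
    (∀ t ∈ Icc (0:ℝ) 1, ∀ x ∈ E ∩ frontier U, ‖φ t x - x‖ < δ) ∧
    F = φ 1 '' E

/-- The class `F̄_δ(E, cl U)` of limits of `δ`-sliding deformations of `E`. -/
def slidingLimClass (d : ℕ) (δ : ℝ) (U E : Set (Euc n)) : Set (Set (Euc n)) :=
  {F | F ⊆ closure U ∧ IsClosed F ∧
    (∃ S : ℕ → Set (Euc n), (∀ k, IsSlidingDeformation δ U E (S k)) ∧ LocHausTendsto S F) ∧
    (∀ (x : Euc n) (r : ℝ), μH[(d:ℝ)] (F ∩ closedBall x r) < ⊤) ∧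
    μH[(d:ℝ)] ((F ∩ frontier U) \ E) = 0}

/-- `E` is `δ`-sliding minimal in `cl(U)`. -/
def IsSlidingMinimal (d : ℕ) (δ : ℝ) (U E : Set (Euc n)) : Prop :=
  ∀ F ∈ slidingLimClass d δ U E, μH[(d:ℝ)] (E \ F) ≤ μH[(d:ℝ)] (F \ E)

/-- The trace of a cone on the unit sphere. -/
def spherePart (K : Set (Euc n)) : Set (Euc n) := K ∩ sphere (0 : Euc n) 1

/-- A point of `K ∩ ∂B(0,1)` at which the net `K ∩ ∂B(0,1)` is not locally
homeomorphic to an interval (a `Y` point of the net). -/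
def IsYPoint (K : Set (Euc n)) (a : Euc n) : Prop :=
  a ∈ spherePart K ∧
  ¬ ∃ W : Set (Euc n), IsOpen W ∧ a ∈ W ∧
      Nonempty ((spherePart K ∩ W : Set (Euc n)) ≃ₜ (Set.Ioo (0:ℝ) 1))

/-- The convex domain `U(K,η)` associated to a `2`-dimensional minimal cone `K`. -/
def UDomain (K : Set (Euc n)) (η : ℝ) : Set (Euc n) :=
  {x ∈ ball (0 : Euc n) 1 |
    (∀ y ∈ spherePart K, ⟪x, y⟫ < 1 - η) ∧
    (∀ a : Euc n, IsYPoint K a → ⟪x, a⟫ < 1 - 2 * η)}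

/-- `K` is sliding stable: for some small `η` and some `δ > 0`, `K` is
`δ`-sliding minimal in `cl(U(K,η))`. -/
def SlidingStable (d : ℕ) (K : Set (Euc n)) : Prop :=
  ∃ η δ : ℝ, 0 < η ∧ η < 1 / 100 ∧ 0 < δ ∧
    IsSlidingMinimal d δ (UDomain K η) (K ∩ closure (UDomain K η))

/-- The minimal angle between two cones: the largest `θ ∈ [0,π/2]` such that
`|⟨u,v⟩| ≤ cos θ‖u‖‖v‖` for all `u ∈ A`, `v ∈ B`. -/
def minAngle (A B : Set (Euc n)) : ℝ :=
  sSup {θ : ℝ | θ ∈ Icc 0 (Real.pi / 2) ∧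
    ∀ u ∈ A, ∀ v ∈ B, |⟪u, v⟫| ≤ Real.cos θ * (‖u‖ * ‖v‖)}

/-- `|x₁ ∧ ⋯ ∧ x_d|`: the `d`-volume of the parallelepiped spanned by `x₁,…,x_d`,
i.e. the square root of the Gram determinant. -/
def wedgeNorm {d : ℕ} (x : Fin d → Euc n) : ℝ :=
  Real.sqrt (Matrix.det (Matrix.of fun i j => ⟪x i, x j⟫))

/-- The isometric inclusion `ℝ^{n₁} → ℝ^{n₁} × {0} ⊆ ℝ^{n₁+n₂}`. -/
def pad1 (n₁ n₂ : ℕ) (x : Euc n₁) : Euc (n₁ + n₂) :=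
  (EuclideanSpace.equiv (Fin (n₁ + n₂)) ℝ).symm
    (fun i => if h : (i : ℕ) < n₁ then x ⟨i, h⟩ else 0)

/-- The isometric inclusion `ℝ^{n₂} → {0} × ℝ^{n₂} ⊆ ℝ^{n₁+n₂}`. -/
def pad2 (n₁ n₂ : ℕ) (x : Euc n₂) : Euc (n₁ + n₂) :=
  (EuclideanSpace.equiv (Fin (n₁ + n₂)) ℝ).symm
    (fun i => if _ : (i : ℕ) < n₁ then 0 else x ⟨(i : ℕ) - n₁, by omega⟩)

/-- The orthogonal union `E₁ ∪⊥ E₂ = (E₁ × {0}) ∪ ({0} × E₂) ⊆ ℝ^{n₁+n₂}`. -/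
def orthUnion (n₁ n₂ : ℕ) (E₁ : Set (Euc n₁)) (E₂ : Set (Euc n₂)) : Set (Euc (n₁ + n₂)) :=
  pad1 n₁ n₂ '' E₁ ∪ pad2 n₁ n₂ '' E₂

/-- The projection `ℝ^{n₁+n₂} → ℝ^{n₁}` on the first factor. -/
def proj1 (n₁ n₂ : ℕ) (x : Euc (n₁ + n₂)) : Euc n₁ :=
  (EuclideanSpace.equiv (Fin n₁) ℝ).symm fun i => x (Fin.castAdd n₂ i)

/-- The projection `ℝ^{n₁+n₂} → ℝ^{n₂}` on the second factor. -/
def proj2 (n₁ n₂ : ℕ) (x : Euc (n₁ + n₂)) : Euc n₂ :=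
  (EuclideanSpace.equiv (Fin n₂) ℝ).symm fun i => x (Fin.natAdd n₁ i)

/-- Orthogonal projection of `ℝ^{n₁+n₂}` onto `P¹ = ℝ^{n₁} × {0}`. -/
def projTo1 (n₁ n₂ : ℕ) (x : Euc (n₁ + n₂)) : Euc (n₁ + n₂) := pad1 n₁ n₂ (proj1 n₁ n₂ x)

/-- Orthogonal projection of `ℝ^{n₁+n₂}` onto `P² = {0} × ℝ^{n₂}`. -/
def projTo2 (n₁ n₂ : ℕ) (x : Euc (n₁ + n₂)) : Euc (n₁ + n₂) := pad2 n₁ n₂ (proj2 n₁ n₂ x)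

/-- `T` is the approximate tangent `d`-plane of `F` at `x`. -/
def IsApproxTangent (d : ℕ) (F : Set (Euc n)) (x : Euc n) (T : Submodule ℝ (Euc n)) : Prop :=
  Module.finrank ℝ T = d ∧
  0 < Filter.limsup (fun r : ℝ => μH[(d:ℝ)] (F ∩ ball x r) / ENNReal.ofReal (r ^ d))
      (nhdsWithin 0 (Ioi 0)) ∧
  ∀ ε : ℝ, 0 < ε →
    Tendsto (fun r : ℝ =>
        μH[(d:ℝ)] ((F ∩ ball x r) ∩ {y | ε * ‖y - x‖ < infDist (y - x) (T : Set (Euc n))}) /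
          ENNReal.ofReal (r ^ d))
      (nhdsWithin 0 (Ioi 0)) (nhds 0)

/-- `F` is `d`-rectifiable. -/
def IsRectifiable (d : ℕ) (F : Set (Euc n)) : Prop :=
  ∃ f : ℕ → (Euc d → Euc n),
    (∀ k, ∃ L : ℝ≥0, LipschitzWith L (f k)) ∧
    μH[(d:ℝ)] (F \ ⋃ k, range (f k)) = 0

/-- Orthogonal projection onto a submodule, as a map of the ambient space. -/
def oproj (P : Submodule ℝ (Euc n)) (v : Euc n) : Euc n :=
  (Submodule.orthogonalProjection P v : Euc n)

/-- A nonzero vector `z` has angle `α` between `P¹` and `P²`. -/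
def HasAngleBetween (P₁ P₂ : Submodule ℝ (Euc n)) (α : ℝ) (z : Euc n) : Prop :=
  ‖oproj P₁ z‖ = Real.cos α * ‖z‖ ∧ ‖oproj P₂ z‖ = Real.sin α * ‖z‖

/-- `T` is a `d`-analytic subspace between `P¹` and `P²` with angle `α`. -/
def IsAnalyticSubspace (P₁ P₂ : Submodule ℝ (Euc n)) (α : ℝ) (T : Submodule ℝ (Euc n)) : Prop :=
  ∀ z ∈ T, z ≠ 0 → HasAngleBetween P₁ P₂ α z

/-- The point `(a,b) ∈ ℝ²`. -/
def mk2 (a b : ℝ) : Euc 2 := (EuclideanSpace.equiv (Fin 2) ℝ).symm ![a, b]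

/-- The sector `R_α = {(r,θ) : r₀ ≤ r ≤ 1, 0 ≤ θ ≤ π/α}` (polar coordinates). -/
def sectorR (α : ℕ) (r₀ : ℝ) : Set (Euc 2) :=
  {x | ∃ r θ : ℝ, r₀ ≤ r ∧ r ≤ 1 ∧ 0 ≤ θ ∧ θ ≤ Real.pi / α ∧
    x = mk2 (r * Real.cos θ) (r * Real.sin θ)}

/-- The inner arc `L_α = {(r₀,θ) : 0 ≤ θ ≤ π/α}`. -/
def sectorL (α : ℕ) (r₀ : ℝ) : Set (Euc 2) :=
  {x | ∃ θ : ℝ, 0 ≤ θ ∧ θ ≤ Real.pi / α ∧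
    x = mk2 (r₀ * Real.cos θ) (r₀ * Real.sin θ)}

/-- The outer arc `K_α = {(1,θ) : 0 ≤ θ ≤ π/α}`. -/
def sectorK (α : ℕ) : Set (Euc 2) :=
  {x | ∃ θ : ℝ, 0 ≤ θ ∧ θ ≤ Real.pi / α ∧ x = mk2 (Real.cos θ) (Real.sin θ)}

/-- The annular sector `{(r,θ) : s/4 ≤ r ≤ 2s, 0 ≤ θ ≤ θ₀}`. -/
def annR (θ₀ s : ℝ) : Set (Euc 2) :=
  {x | ∃ r θ : ℝ, s / 4 ≤ r ∧ r ≤ 2 * s ∧ 0 ≤ θ ∧ θ ≤ θ₀ ∧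
    x = mk2 (r * Real.cos θ) (r * Real.sin θ)}

/-- The annular sector `{(r,θ) : s/4 ≤ r ≤ s, 0 ≤ θ ≤ θ₀}`. -/
def annR' (θ₀ s : ℝ) : Set (Euc 2) :=
  {x | ∃ r θ : ℝ, s / 4 ≤ r ∧ r ≤ s ∧ 0 ≤ θ ∧ θ ≤ θ₀ ∧
    x = mk2 (r * Real.cos θ) (r * Real.sin θ)}

/-
Let `w` be an orthonormal basis of `T`. If every vector of `T` has angle `α`, the projection
`p¹` scales norms on `T` by `cos α`, so by polarization it scales inner products by `cos² α`;
hence `p¹ w` is `cos α` times an orthonormal system `u` in `P¹` (any orthonormal system when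
`cos α = 0`). Likewise `p² w = sin α • v`, and `w = p¹ w + p² w = cos α • u + sin α • v`.
Conversely, for `z = ∑ aᵢ wᵢ ∈ T` we get `p¹ z = cos α • ∑ aᵢ uᵢ`, and `∑ aᵢ uᵢ` has the same
norm as `z` because `u` and `w` are both orthonormal.
-/

section General

variable {E F : Type*} [NormedAddCommGroup E] [InnerProductSpace ℝ E]
  [NormedAddCommGroup F] [InnerProductSpace ℝ F]

theorem Submodule.eq_orthogonal_of_le_orthogonal_of_sup_eq_top {P₁ P₂ : Submodule ℝ E}
    (horth : P₁ ≤ P₂ᗮ) (hcompl : P₁ ⊔ P₂ = ⊤) : P₂ = P₁ᗮ :=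
  eq_of_le_of_inf_le_of_sup_le (z := P₁) ((Submodule.isOrtho_iff_le.2 horth).ge)
    (by rw [inf_comm, Submodule.inf_orthogonal_eq_bot]; exact bot_le)
    (by rw [sup_comm P₂, hcompl]; exact le_top)

theorem Submodule.starProjection_add_of_mem_of_mem_orthogonal (K : Submodule ℝ E)
    [K.HasOrthogonalProjection] {x y : E} (hx : x ∈ K) (hy : y ∈ Kᗮ) :
    K.starProjection (x + y) = x := by
  rw [map_add, K.starProjection_eq_self_iff.2 hx, K.starProjection_apply_eq_zero_iff.2 hy,
    add_zero]

theorem LinearMap.inner_map_map_of_norm_map_eq_mul (f : E →ₗ[ℝ] F) {T : Submodule ℝ E} {c : ℝ}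
    (hf : ∀ z ∈ T, ‖f z‖ = c * ‖z‖) {x y : E} (hx : x ∈ T) (hy : y ∈ T) :
    ⟪f x, f y⟫ = c ^ 2 * ⟪x, y⟫ := by
  have hsq : ∀ z ∈ T, ‖f z‖ * ‖f z‖ = c ^ 2 * (‖z‖ * ‖z‖) := fun z hz => by
    rw [hf z hz]; ring
  rw [real_inner_eq_norm_add_mul_self_sub_norm_mul_self_sub_norm_mul_self_div_two,
    real_inner_eq_norm_add_mul_self_sub_norm_mul_self_sub_norm_mul_self_div_two x y, ← map_add,
    hsq _ (T.add_mem hx hy), hsq x hx, hsq y hy]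
  ring

theorem Orthonormal.norm_sum_smul_eq {ι : Type*} [Fintype ι] {u w : ι → E}
    (hu : Orthonormal ℝ u) (hw : Orthonormal ℝ w) (a : ι → ℝ) :
    ‖∑ i, a i • u i‖ = ‖∑ i, a i • w i‖ := by
  rw [← sq_eq_sq₀ (norm_nonneg _) (norm_nonneg _), ← real_inner_self_eq_norm_sq,
    ← real_inner_self_eq_norm_sq, hu.inner_sum, hw.inner_sum]

theorem Submodule.exists_orthonormal_fin_of_le_finrank {d : ℕ} (P : Submodule ℝ E)
    [FiniteDimensional ℝ P] (hd : d ≤ Module.finrank ℝ P) :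
    ∃ u : Fin d → E, Orthonormal ℝ u ∧ ∀ i, u i ∈ P :=
  ⟨fun i => stdOrthonormalBasis ℝ P (Fin.castLE hd i),
    ((stdOrthonormalBasis ℝ P).orthonormal.comp _ (Fin.castLE_injective hd)).comp_linearIsometry
      P.subtypeₗᵢ,
    fun i => (stdOrthonormalBasis ℝ P (Fin.castLE hd i)).2⟩

theorem Submodule.exists_orthonormal_span_eq_of_finrank_eq {d : ℕ} (T : Submodule ℝ E)
    [FiniteDimensional ℝ T] (hT : Module.finrank ℝ T = d) :
    ∃ w : Fin d → E, Orthonormal ℝ w ∧ Submodule.span ℝ (range w) = T := by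
  let b := (stdOrthonormalBasis ℝ T).reindex (finCongr hT)
  refine ⟨fun i => b i, b.orthonormal.comp_linearIsometry T.subtypeₗᵢ, ?_⟩
  rw [show range (fun i => (b i : E)) = T.subtype '' range b from range_comp _ _,
    ← Submodule.map_span, ← b.coe_toBasis, b.toBasis.span_eq, Submodule.map_top,
    Submodule.range_subtype]

theorem Submodule.exists_orthonormal_smul_eq {d : ℕ} {P : Submodule ℝ E}
    [FiniteDimensional ℝ P] (hd : d ≤ Module.finrank ℝ P) {c : ℝ} {w x : Fin d → E} (hw : Orthonormal ℝ w)
    (hxP : ∀ i, x i ∈ P) (hx : ∀ i j, ⟪x i, x j⟫ = c ^ 2 * ⟪w i, w j⟫) :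
    ∃ u : Fin d → E, Orthonormal ℝ u ∧ (∀ i, u i ∈ P) ∧ ∀ i, c • u i = x i := by
  by_cases hc : c = 0
  · obtain ⟨u, hu, huP⟩ := P.exists_orthonormal_fin_of_le_finrank hd
    refine ⟨u, hu, huP, fun i => ?_⟩
    have hxx : ⟪x i, x i⟫ = 0 := by rw [hx, hc]; ring
    rw [hc, zero_smul, inner_self_eq_zero.1 hxx]
  · refine ⟨fun i => c⁻¹ • x i, ?_, fun i => P.smul_mem _ (hxP i), fun i => ?_⟩
    · rw [orthonormal_iff_ite] at hw ⊢
      intro i j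
      rw [real_inner_smul_left, real_inner_smul_right, hx, hw]
      field_simp
    · rw [smul_smul, mul_inv_cancel₀ hc, one_smul]

end General

theorem oproj_eq_starProjection (P : Submodule ℝ (Euc n)) : oproj P = P.starProjection := rfl

theorem IsAnalyticSubspace.norm_oproj_left {P₁ P₂ T : Submodule ℝ (Euc n)} {α : ℝ}
    (hA : IsAnalyticSubspace P₁ P₂ α T) {z : Euc n} (hz : z ∈ T) :
    ‖oproj P₁ z‖ = Real.cos α * ‖z‖ := by
  rcases eq_or_ne z 0 with rfl | hz0
  · simp [oproj_eq_starProjection]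
  · exact (hA z hz hz0).1

theorem IsAnalyticSubspace.norm_oproj_right {P₁ P₂ T : Submodule ℝ (Euc n)} {α : ℝ}
    (hA : IsAnalyticSubspace P₁ P₂ α T) {z : Euc n} (hz : z ∈ T) :
    ‖oproj P₂ z‖ = Real.sin α * ‖z‖ := by
  rcases eq_or_ne z 0 with rfl | hz0
  · simp [oproj_eq_starProjection]
  · exact (hA z hz hz0).2

theorem IsAnalyticSubspace.exists_orthonormal_systems {d : ℕ} {P₁ P₂ T : Submodule ℝ (Euc n)}
    {α : ℝ} (horth : P₁ ≤ P₂ᗮ) (hcompl : P₁ ⊔ P₂ = ⊤)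
    (hd : d ≤ min (Module.finrank ℝ P₁) (Module.finrank ℝ P₂)) (hT : Module.finrank ℝ T = d)
    (hA : IsAnalyticSubspace P₁ P₂ α T) :
    ∃ u v : Fin d → Euc n,
      Orthonormal ℝ u ∧ (∀ i, u i ∈ P₁) ∧
      Orthonormal ℝ v ∧ (∀ i, v i ∈ P₂) ∧
      Orthonormal ℝ (fun i => Real.cos α • u i + Real.sin α • v i) ∧
      Submodule.span ℝ (range fun i => Real.cos α • u i + Real.sin α • v i) = T := by
  obtain ⟨w, hw, hspan⟩ := T.exists_orthonormal_span_eq_of_finrank_eq hT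
  have hwT : ∀ i, w i ∈ T := fun i => hspan ▸ Submodule.subset_span (mem_range_self i)
  obtain ⟨u, hu, huP, hcu⟩ := Submodule.exists_orthonormal_smul_eq (hd.trans (min_le_left _ _)) hw
    (fun i => P₁.starProjection_apply_mem (w i)) fun i j =>
      LinearMap.inner_map_map_of_norm_map_eq_mul P₁.starProjection.toLinearMap
        (fun z hz => hA.norm_oproj_left hz) (hwT i) (hwT j)
  obtain ⟨v, hv, hvP, hsv⟩ := Submodule.exists_orthonormal_smul_eq (hd.trans (min_le_right _ _))
    hw (fun i => P₂.starProjection_apply_mem (w i)) fun i j =>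
      LinearMap.inner_map_map_of_norm_map_eq_mul P₂.starProjection.toLinearMap
        (fun z hz => hA.norm_oproj_right hz) (hwT i) (hwT j)
  have hw_eq : (fun i => Real.cos α • u i + Real.sin α • v i) = w := by
    funext i
    rw [hcu, hsv, Submodule.eq_orthogonal_of_le_orthogonal_of_sup_eq_top horth hcompl,
      Submodule.starProjection_add_starProjection_orthogonal]
  exact ⟨u, v, hu, huP, hv, hvP, hw_eq ▸ hw, hw_eq ▸ hspan⟩

theorem isAnalyticSubspace_of_orthonormal_systems {d : ℕ} {P₁ P₂ : Submodule ℝ (Euc n)}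
    {α : ℝ} (horth : P₁ ≤ P₂ᗮ) (hcos : 0 ≤ Real.cos α) (hsin : 0 ≤ Real.sin α)
    {u v : Fin d → Euc n} (hu : Orthonormal ℝ u) (huP : ∀ i, u i ∈ P₁)
    (hv : Orthonormal ℝ v) (hvP : ∀ i, v i ∈ P₂)
    (hw : Orthonormal ℝ fun i => Real.cos α • u i + Real.sin α • v i) :
    IsAnalyticSubspace P₁ P₂ α
      (Submodule.span ℝ (range fun i => Real.cos α • u i + Real.sin α • v i)) := by
  intro z hz _
  obtain ⟨a, rfl⟩ := (Submodule.mem_span_range_iff_exists_fun ℝ).1 hz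
  have hsplit : ∑ i, a i • (Real.cos α • u i + Real.sin α • v i)
      = Real.cos α • ∑ i, a i • u i + Real.sin α • ∑ i, a i • v i := by
    simp only [smul_add, Finset.sum_add_distrib, Finset.smul_sum, smul_comm (a _)]
  have hx : Real.cos α • ∑ i, a i • u i ∈ P₁ :=
    P₁.smul_mem _ (P₁.sum_mem fun i _ => P₁.smul_mem _ (huP i))
  have hy : Real.sin α • ∑ i, a i • v i ∈ P₂ :=
    P₂.smul_mem _ (P₂.sum_mem fun i _ => P₂.smul_mem _ (hvP i))
  have hortho := Submodule.isOrtho_iff_le.2 horth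
  constructor
  · nth_rw 1 [oproj_eq_starProjection, hsplit]
    rw [P₁.starProjection_add_of_mem_of_mem_orthogonal hx (hortho.ge hy), norm_smul,
      Real.norm_of_nonneg hcos, hu.norm_sum_smul_eq hw]
  · nth_rw 1 [oproj_eq_starProjection, hsplit, add_comm]
    rw [P₂.starProjection_add_of_mem_of_mem_orthogonal hy (hortho.le hx), norm_smul,
      Real.norm_of_nonneg hsin, hv.norm_sum_smul_eq hw]

theorem analytic_subspace_iff_orthonormal_systems_general
    (n d : ℕ) (P₁ P₂ : Submodule ℝ (Euc n))
    (horth : P₁ ≤ P₂ᗮ) (hcompl : P₁ ⊔ P₂ = ⊤)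
    (α : ℝ) (hα : α ∈ Icc 0 (Real.pi / 2))
    (hd : d ≤ min (Module.finrank ℝ P₁) (Module.finrank ℝ P₂))
    (T : Submodule ℝ (Euc n)) (hT : Module.finrank ℝ T = d) :
    IsAnalyticSubspace P₁ P₂ α T ↔
      ∃ u v : Fin d → Euc n,
        Orthonormal ℝ u ∧ (∀ i, u i ∈ P₁) ∧
        Orthonormal ℝ v ∧ (∀ i, v i ∈ P₂) ∧
        Orthonormal ℝ (fun i => Real.cos α • u i + Real.sin α • v i) ∧
        Submodule.span ℝ (range fun i => Real.cos α • u i + Real.sin α • v i) = T := by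
  refine ⟨IsAnalyticSubspace.exists_orthonormal_systems horth hcompl hd hT, ?_⟩
  rintro ⟨u, v, hu, huP, hv, hvP, hw, rfl⟩
  have hcos : 0 ≤ Real.cos α :=
    Real.cos_nonneg_of_mem_Icc ⟨by linarith [hα.1, Real.pi_pos], hα.2⟩
  have hsin : 0 ≤ Real.sin α :=
    Real.sin_nonneg_of_nonneg_of_le_pi hα.1 (by linarith [hα.2, Real.pi_pos])
  exact isAnalyticSubspace_of_orthonormal_systems horth hcos hsin hu huP hv hvP hw

/-- **Characterization of analytic `d`-subspaces.** Let `P¹ ⊥ P²` with `P¹ ⊕ P² = ℝⁿ`,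
`α ∈ [0,π/2]`, and `1 ≤ d ≤ min{dim P¹, dim P²}`. A `d`-dimensional subspace `T` is
`d`-analytic between `P¹` and `P²` with angle `α` iff there are orthonormal systems
`u₁,…,u_d` in `P¹` and `v₁,…,v_d` in `P²` such that the vectors
`w_i = cos α·u_i + sin α·v_i` form an orthonormal basis of `T`. -/
theorem analytic_subspace_iff_orthonormal_systems
    (n d : ℕ) (P₁ P₂ : Submodule ℝ (Euc n))
    (horth : P₁ ≤ P₂ᗮ) (hcompl : P₁ ⊔ P₂ = ⊤)
    (α : ℝ) (hα : α ∈ Icc 0 (Real.pi / 2))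
    (hd₁ : 1 ≤ d) (hd : d ≤ min (Module.finrank ℝ P₁) (Module.finrank ℝ P₂))
    (T : Submodule ℝ (Euc n)) (hT : Module.finrank ℝ T = d) :
    IsAnalyticSubspace P₁ P₂ α T ↔
      ∃ u v : Fin d → Euc n,
        Orthonormal ℝ u ∧ (∀ i, u i ∈ P₁) ∧
        Orthonormal ℝ v ∧ (∀ i, v i ∈ P₂) ∧
        Orthonormal ℝ (fun i => Real.cos α • u i + Real.sin α • v i) ∧
        Submodule.span ℝ (range fun i => Real.cos α • u i + Real.sin α • v i) = T :=
  analytic_subspace_iff_orthonormal_systems_general n d P₁ P₂ horth hcompl α hα hd T hT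

end
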